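/- (Lemma III.1) Let Assumption 1 hold (the injectivity of B is not needed here) and let (x^k), (y^k), (p^k) be BADMM iterates. Then there exist σ₀ > 0 and σ₁ > 0 such that, defining L̂(x, y, p, x̂) := L_α(x, y, p) + (σ₀/2)‖x − x̂‖², for every k ≥ 1: σ₁‖x^{k+1} − x^k‖² ≤ L̂(x^k, y^k, p^k, x^{k−1}) − L̂(x^{k+1}, y^{k+1}, p^{k+1}, x^k). -/

import Mathlib

/-!
The first-order condition of the `x`-subproblem, rewritten with the multiplier update, reads
`Aᵀ p^{k+1} = -∇f(x^{k+1}) - (∇φ(x^{k+1}) - ∇φ(x^k))`. Since `A Aᵀ ⪰ μ₀ I`, the multiplier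
increment `‖p^{k+1} - p^k‖²` is therefore bounded by the last two `x`-increments. Along one
iteration the `y`-step does not increase `L_α`, the `x`-step decreases it by at least
`μ₁/2 ‖x^{k+1} - x^k‖²` (strong convexity at a minimizer, or of the Bregman term), and the
multiplier step increases it by exactly `‖p^{k+1} - p^k‖² / α`. The lower bound on `α` makes the
decrease win, and the remaining term in `‖x^k - x^{k-1}‖²` is absorbed by the correction
`σ₀/2 ‖x - x̂‖²`.
-/

open scoped InnerProductSpace

/-- The augmented Lagrangian `L_α(x,y,p)`. -/
noncomputable def augL {n₁ n₂ m : ℕ}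
    (A : EuclideanSpace ℝ (Fin n₁) →L[ℝ] EuclideanSpace ℝ (Fin m))
    (B : EuclideanSpace ℝ (Fin n₂) →L[ℝ] EuclideanSpace ℝ (Fin m))
    (f : EuclideanSpace ℝ (Fin n₁) → ℝ) (g : EuclideanSpace ℝ (Fin n₂) → ℝ)
    (α : ℝ) (x : EuclideanSpace ℝ (Fin n₁)) (y : EuclideanSpace ℝ (Fin n₂))
    (p : EuclideanSpace ℝ (Fin m)) : ℝ :=
  f x + g y + ⟪p, A x - B y⟫_ℝ + α / 2 * ‖A x - B y‖ ^ 2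

/-- Bregman distance of a differentiable function `h` with gradient `h'`. -/
noncomputable def bregman {n : ℕ} (h : EuclideanSpace ℝ (Fin n) → ℝ)
    (h' : EuclideanSpace ℝ (Fin n) → EuclideanSpace ℝ (Fin n))
    (u v : EuclideanSpace ℝ (Fin n)) : ℝ :=
  h u - h v - ⟪h' v, u - v⟫_ℝ

open scoped InnerProduct
open Set

section ConvexGradient

theorem ConvexOn.hasFDerivAt_apply_sub_le {E : Type*} [NormedAddCommGroup E] [NormedSpace ℝ E]
    {h : E → ℝ} {L : E →L[ℝ] ℝ} {v : E} (hc : ConvexOn ℝ univ h) (hL : HasFDerivAt h L v)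
    (u : E) : L (u - v) ≤ h u - h v := by
  have hline : ConvexOn ℝ univ (h ∘ AffineMap.lineMap (k := ℝ) v u) := hc.comp_affineMap _
  have hderiv : HasDerivAt (h ∘ AffineMap.lineMap (k := ℝ) v u) (L (u - v)) 0 := by
    refine HasFDerivAt.comp_hasDerivAt (0 : ℝ) ?_ AffineMap.hasDerivAt_lineMap
    simpa using hL
  simpa [slope] using hline.le_slope_of_hasDerivAt (mem_univ 0) (mem_univ 1) one_pos hderiv

variable {E : Type*} [NormedAddCommGroup E] [InnerProductSpace ℝ E] {h : E → ℝ}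
  {L : E →L[ℝ] ℝ} {m : ℝ} {v : E}

theorem StrongConvexOn.hasFDerivAt_le (hc : StrongConvexOn univ m h) (hL : HasFDerivAt h L v)
    (u : E) : h v + L (u - v) + m / 2 * ‖u - v‖ ^ 2 ≤ h u := by
  have hq := (hasStrictFDerivAt_norm_sq v).hasFDerivAt.const_mul (m / 2)
  have := (strongConvexOn_iff_convex.1 hc).hasFDerivAt_apply_sub_le (hL.sub hq) u
  simp only [sub_apply, smul_apply, innerSL_apply_apply, smul_eq_mul, nsmul_eq_mul,
    Nat.cast_ofNat, inner_sub_right, real_inner_self_eq_norm_sq, real_inner_comm u v] at this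
  linear_combination this + m / 2 * norm_sub_sq_real u v

theorem StrongConvexOn.add_sq_norm_sub_le_of_isMinOn (hc : StrongConvexOn univ m h)
    (hmin : IsMinOn h univ v) (hd : DifferentiableAt ℝ h v) (u : E) :
    h v + m / 2 * ‖u - v‖ ^ 2 ≤ h u := by
  have hL := hd.hasFDerivAt
  rw [(hmin.isLocalMin Filter.univ_mem).fderiv_eq_zero] at hL
  simpa using hc.hasFDerivAt_le hL u

variable [CompleteSpace E] {f : E → ℝ} {a b x : E}

theorem HasGradientAt.add {g : E → ℝ} (hf : HasGradientAt f a x) (hg : HasGradientAt g b x) :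
    HasGradientAt (fun x => f x + g x) (a + b) x := by
  rw [hasGradientAt_iff_hasFDerivAt, map_add]
  exact hf.hasFDerivAt.add hg.hasFDerivAt

theorem IsLocalMin.hasGradientAt_eq_zero (hmin : IsLocalMin f x) (hf : HasGradientAt f a x) :
    a = 0 := by
  simpa using hmin.hasFDerivAt_eq_zero hf.hasFDerivAt

end ConvexGradient

section Bregman

variable {n : ℕ} {h : EuclideanSpace ℝ (Fin n) → ℝ}
  {h' : EuclideanSpace ℝ (Fin n) → EuclideanSpace ℝ (Fin n)} {m : ℝ}
  {u v : EuclideanSpace ℝ (Fin n)}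

@[simp]
theorem bregman_self (h : EuclideanSpace ℝ (Fin n) → ℝ)
    (h' : EuclideanSpace ℝ (Fin n) → EuclideanSpace ℝ (Fin n)) (v : EuclideanSpace ℝ (Fin n)) :
    bregman h h' v v = 0 := by
  simp [bregman]

theorem StrongConvexOn.sq_norm_sub_le_bregman (hc : StrongConvexOn univ m h)
    (hv : HasGradientAt h (h' v) v) (u : EuclideanSpace ℝ (Fin n)) :
    m / 2 * ‖u - v‖ ^ 2 ≤ bregman h h' u v := by
  have := hc.hasFDerivAt_le hv.hasFDerivAt u
  rw [InnerProductSpace.toDual_apply_apply] at this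
  rw [bregman]
  linarith

theorem ConvexOn.bregman_nonneg (hc : ConvexOn ℝ univ h) (hv : HasGradientAt h (h' v) v)
    (u : EuclideanSpace ℝ (Fin n)) : 0 ≤ bregman h h' u v := by
  simpa using (strongConvexOn_zero.2 hc).sq_norm_sub_le_bregman hv u

theorem ConvexOn.convexOn_bregman (hc : ConvexOn ℝ univ h) (v : EuclideanSpace ℝ (Fin n)) :
    ConvexOn ℝ univ (fun u => bregman h h' u v) := by
  have hlin := (innerSL ℝ (h' v)).toLinearMap.concaveOn convex_univ
  have hfun : (fun u => bregman h h' u v)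
      = fun u => h u - innerSL ℝ (h' v) u + (⟪h' v, v⟫_ℝ - h v) := by
    ext u; simp only [bregman, innerSL_apply_apply, inner_sub_right]; ring
  rw [hfun]
  exact (hc.sub hlin).add_const _

theorem hasGradientAt_bregman_left (hu : HasGradientAt h (h' u) u)
    (v : EuclideanSpace ℝ (Fin n)) :
    HasGradientAt (fun w => bregman h h' w v) (h' u - h' v) u := by
  have hfun : (fun w => bregman h h' w v)
      = fun w => h w - h v - (innerSL ℝ (h' v) w - ⟪h' v, v⟫_ℝ) := by
    ext w; simp only [bregman, inner_sub_right, coe_innerSL_apply]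
  rw [hfun, hasGradientAt_iff_hasFDerivAt, map_sub]
  exact (hu.hasFDerivAt.sub_const (h v)).sub ((innerSL ℝ (h' v)).hasFDerivAt.sub_const _)

def IsBregmanProx (F : EuclideanSpace ℝ (Fin n) → ℝ) (h : EuclideanSpace ℝ (Fin n) → ℝ)
    (h' : EuclideanSpace ℝ (Fin n) → EuclideanSpace ℝ (Fin n))
    (x₀ x₁ : EuclideanSpace ℝ (Fin n)) : Prop :=
  ∀ x, F x₁ + bregman h h' x₁ x₀ ≤ F x + bregman h h' x x₀

namespace IsBregmanProx

variable {F : EuclideanSpace ℝ (Fin n) → ℝ} {x₀ x₁ : EuclideanSpace ℝ (Fin n)}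

theorem add_sq_norm_le (hx : IsBregmanProx F h h' x₀ x₁) (hc : StrongConvexOn univ m h)
    (h₀ : HasGradientAt h (h' x₀) x₀) : F x₁ + m / 2 * ‖x₁ - x₀‖ ^ 2 ≤ F x₀ := by
  have := hx x₀
  rw [bregman_self] at this
  linarith [hc.sq_norm_sub_le_bregman h₀ x₁]

theorem le (hx : IsBregmanProx F h h' x₀ x₁) (hc : ConvexOn ℝ univ h)
    (h₀ : HasGradientAt h (h' x₀) x₀) : F x₁ ≤ F x₀ := by
  simpa using hx.add_sq_norm_le (strongConvexOn_zero.2 hc) h₀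

theorem add_sq_norm_le_of_strongConvexOn (hx : IsBregmanProx F h h' x₀ x₁)
    (hF : StrongConvexOn univ m F) (hc : ConvexOn ℝ univ h) (h₀ : HasGradientAt h (h' x₀) x₀)
    (hFd : DifferentiableAt ℝ F x₁) (hd : DifferentiableAt ℝ h x₁) :
    F x₁ + m / 2 * ‖x₁ - x₀‖ ^ 2 ≤ F x₀ := by
  have hG : StrongConvexOn univ m (fun x => F x + bregman h h' x x₀) := by
    have hsum := (strongConvexOn_iff_convex.1 hF).add (hc.convexOn_bregman (h' := h') x₀)
    have hfun : ((fun x => F x - m / 2 * ‖x‖ ^ 2) + fun x => bregman h h' x x₀)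
        = fun x => F x + bregman h h' x x₀ - m / 2 * ‖x‖ ^ 2 := by
      ext x; simp only [Pi.add_apply]; ring
    rw [hfun] at hsum
    exact strongConvexOn_iff_convex.2 hsum
  have hGd : DifferentiableAt ℝ (fun x => F x + bregman h h' x x₀) x₁ := by
    unfold bregman
    exact hFd.add ((hd.sub_const _).sub
      ((differentiableAt_const _).inner ℝ (differentiableAt_id.sub_const _)))
  have := hG.add_sq_norm_sub_le_of_isMinOn (isMinOn_univ_iff.2 fun x => hx x) hGd x₀
  rw [bregman_self, norm_sub_rev] at this
  linarith [hc.bregman_nonneg h₀ x₁]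

theorem hasGradientAt_eq_zero (hx : IsBregmanProx F h h' x₀ x₁) {a : EuclideanSpace ℝ (Fin n)}
    (hF : HasGradientAt F a x₁) (h₁ : HasGradientAt h (h' x₁) x₁) :
    a + (h' x₁ - h' x₀) = 0 :=
  (IsMinOn.isLocalMin (isMinOn_univ_iff.2 fun x => hx x) Filter.univ_mem).hasGradientAt_eq_zero
    (hF.add (hasGradientAt_bregman_left h₁ x₀))

end IsBregmanProx

end Bregman

section AugmentedLagrangian

variable {n₁ n₂ m : ℕ} {A : EuclideanSpace ℝ (Fin n₁) →L[ℝ] EuclideanSpace ℝ (Fin m)}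
  {B : EuclideanSpace ℝ (Fin n₂) →L[ℝ] EuclideanSpace ℝ (Fin m)}
  {f : EuclideanSpace ℝ (Fin n₁) → ℝ} {g : EuclideanSpace ℝ (Fin n₂) → ℝ} {α : ℝ}
  {x x₀ x₁ : EuclideanSpace ℝ (Fin n₁)} {y : EuclideanSpace ℝ (Fin n₂)}
  {p p₀ p₁ : EuclideanSpace ℝ (Fin m)}

theorem hasGradientAt_augL_left {a : EuclideanSpace ℝ (Fin n₁)} (hf : HasGradientAt f a x) :
    HasGradientAt (fun x => augL A B f g α x y p) (a + (A†) (p + α • (A x - B y))) x := by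
  have hr : HasFDerivAt (fun x => A x - B y) (A : _ →L[ℝ] _) x := A.hasFDerivAt.sub_const _
  have hsum := ((hf.hasFDerivAt.add_const (g y)).add ((hasFDerivAt_const p x).inner ℝ hr)).add
    (hr.norm_sq.const_mul (α / 2))
  rw [hasGradientAt_iff_hasFDerivAt]
  refine hsum.congr_fderiv ?_
  ext d
  simp only [map_sub, ContinuousLinearMap.sub_comp, add_apply,
    InnerProductSpace.toDual_apply_apply, ContinuousLinearMap.comp_apply,
    ContinuousLinearMap.prod_apply, zero_apply, fderivInnerCLM_apply, inner_zero_left, add_zero,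
    smul_apply, sub_apply, coe_innerSL_apply, nsmul_eq_mul, Nat.cast_ofNat, smul_eq_mul, map_add,
    map_smul, ContinuousLinearMap.adjoint_inner_left]
  ring

theorem augL_of_eq_add_smul (hp : p₁ = p₀ + α • (A x - B y)) :
    augL A B f g α x y p₁ = augL A B f g α x y p₀ + ‖p₁ - p₀‖ ^ 2 / α := by
  subst hp
  simp only [augL, add_sub_cancel_left, norm_smul, Real.norm_eq_abs, mul_pow, sq_abs,
    inner_add_left, real_inner_smul_left, real_inner_self_eq_norm_sq]
  field_simp
  ring

theorem adjoint_eq_of_isBregmanProx {f' φ' : EuclideanSpace ℝ (Fin n₁) → EuclideanSpace ℝ (Fin n₁)}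
    {φ : EuclideanSpace ℝ (Fin n₁) → ℝ}
    (hx : IsBregmanProx (fun x => augL A B f g α x y p₀) φ φ' x₀ x₁)
    (hp : p₁ = p₀ + α • (A x₁ - B y)) (hf : HasGradientAt f (f' x₁) x₁)
    (hφ : HasGradientAt φ (φ' x₁) x₁) :
    (A†) p₁ = -f' x₁ - (φ' x₁ - φ' x₀) := by
  have h0 := hx.hasGradientAt_eq_zero (hasGradientAt_augL_left hf) hφ
  rw [← hp] at h0
  rw [← sub_eq_zero, ← h0]
  abel

theorem augL_add_sq_le_of_isBregmanProx {φ' : EuclideanSpace ℝ (Fin n₁) → EuclideanSpace ℝ (Fin n₁)}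
    {φ : EuclideanSpace ℝ (Fin n₁) → ℝ} {a : EuclideanSpace ℝ (Fin n₁)} {μ : ℝ}
    (hx : IsBregmanProx (fun x => augL A B f g α x y p) φ φ' x₀ x₁)
    (hf : HasGradientAt f a x₁) (hφ : ConvexOn ℝ univ φ)
    (hφ₀ : HasGradientAt φ (φ' x₀) x₀) (hφ₁ : DifferentiableAt ℝ φ x₁)
    (hsc : StrongConvexOn univ μ (fun x => augL A B f g α x y p) ∨ StrongConvexOn univ μ φ) :
    augL A B f g α x₁ y p + μ / 2 * ‖x₁ - x₀‖ ^ 2 ≤ augL A B f g α x₀ y p := by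
  rcases hsc with hL | hφs
  · exact hx.add_sq_norm_le_of_strongConvexOn hL hφ hφ₀
      (hasGradientAt_augL_left hf).differentiableAt hφ₁
  · exact hx.add_sq_norm_le hφs hφ₀

theorem augL_add_sq_le_of_badmm_step {ψ : EuclideanSpace ℝ (Fin n₂) → ℝ}
    {ψ' : EuclideanSpace ℝ (Fin n₂) → EuclideanSpace ℝ (Fin n₂)}
    {φ' : EuclideanSpace ℝ (Fin n₁) → EuclideanSpace ℝ (Fin n₁)}
    {φ : EuclideanSpace ℝ (Fin n₁) → ℝ} {a : EuclideanSpace ℝ (Fin n₁)}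
    {y₀ y₁ : EuclideanSpace ℝ (Fin n₂)} {μ : ℝ}
    (hy : IsBregmanProx (fun y => augL A B f g α x₀ y p₀) ψ ψ' y₀ y₁)
    (hx : IsBregmanProx (fun x => augL A B f g α x y₁ p₀) φ φ' x₀ x₁)
    (hp : p₁ = p₀ + α • (A x₁ - B y₁))
    (hψ : ConvexOn ℝ univ ψ) (hψ₀ : HasGradientAt ψ (ψ' y₀) y₀)
    (hf : HasGradientAt f a x₁) (hφ : ConvexOn ℝ univ φ)
    (hφ₀ : HasGradientAt φ (φ' x₀) x₀) (hφ₁ : DifferentiableAt ℝ φ x₁)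
    (hsc : StrongConvexOn univ μ (fun x => augL A B f g α x y₁ p₀) ∨ StrongConvexOn univ μ φ) :
    augL A B f g α x₁ y₁ p₁ + μ / 2 * ‖x₁ - x₀‖ ^ 2
      ≤ augL A B f g α x₀ y₀ p₀ + ‖p₁ - p₀‖ ^ 2 / α := by
  rw [augL_of_eq_add_smul hp]
  linarith [augL_add_sq_le_of_isBregmanProx hx hf hφ hφ₀ hφ₁ hsc, hy.le hψ hψ₀]

end AugmentedLagrangian

theorem sq_norm_sub_le_of_adjoint_eq {E F : Type*} [NormedAddCommGroup E] [InnerProductSpace ℝ E]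
    [CompleteSpace E] [NormedAddCommGroup F] [InnerProductSpace ℝ F] [CompleteSpace F]
    {A : E →L[ℝ] F} {μ₀ ℓf ℓφ : ℝ} {f' φ' : E → E}
    (hA : ∀ q, μ₀ * ‖q‖ ^ 2 ≤ ‖(A†) q‖ ^ 2) (hf' : ∀ u v, ‖f' u - f' v‖ ≤ ℓf * ‖u - v‖)
    (hφ' : ∀ u v, ‖φ' u - φ' v‖ ≤ ℓφ * ‖u - v‖) {x₀ x₁ x₂ : E} {q₁ q₂ : F}
    (h₁ : (A†) q₁ = -f' x₁ - (φ' x₁ - φ' x₀)) (h₂ : (A†) q₂ = -f' x₂ - (φ' x₂ - φ' x₁)) :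
    μ₀ * ‖q₂ - q₁‖ ^ 2 ≤ 2 * ((ℓf + ℓφ) ^ 2 * ‖x₂ - x₁‖ ^ 2 + ℓφ ^ 2 * ‖x₁ - x₀‖ ^ 2) := by
  have hdiff : (A†) (q₂ - q₁) = -(f' x₂ - f' x₁) - (φ' x₂ - φ' x₁) + (φ' x₁ - φ' x₀) := by
    rw [map_sub, h₁, h₂]; abel
  have hnorm : ‖(A†) (q₂ - q₁)‖ ≤ (ℓf + ℓφ) * ‖x₂ - x₁‖ + ℓφ * ‖x₁ - x₀‖ := by
    rw [hdiff]
    calc _ ≤ ‖-(f' x₂ - f' x₁)‖ + ‖φ' x₂ - φ' x₁‖ + ‖φ' x₁ - φ' x₀‖ :=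
          norm_add_le_of_le (norm_sub_le _ _) le_rfl
      _ ≤ _ := by rw [norm_neg]; linarith [hf' x₂ x₁, hφ' x₂ x₁, hφ' x₁ x₀]
  calc μ₀ * ‖q₂ - q₁‖ ^ 2 ≤ ‖(A†) (q₂ - q₁)‖ ^ 2 := hA _
    _ ≤ ((ℓf + ℓφ) * ‖x₂ - x₁‖ + ℓφ * ‖x₁ - x₀‖) ^ 2 := by gcongr
    _ ≤ 2 * ((ℓf + ℓφ) ^ 2 * ‖x₂ - x₁‖ ^ 2 + ℓφ ^ 2 * ‖x₁ - x₀‖ ^ 2) := by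
      nlinarith [sq_nonneg ((ℓf + ℓφ) * ‖x₂ - x₁‖ - ℓφ * ‖x₁ - x₀‖)]

theorem exists_pos_lyapunov_weights {c₁ c₂ : ℝ} (hc₂ : 0 ≤ c₂) (hc : c₂ < c₁) :
    ∃ σ₀ > (0 : ℝ), ∃ σ₁ > (0 : ℝ), ∀ L L' a b : ℝ, 0 ≤ b → L' + c₁ * a ≤ L + c₂ * b →
      σ₁ * a ≤ (L + σ₀ / 2 * b) - (L' + σ₀ / 2 * a) :=
  ⟨c₁ + c₂, by linarith, (c₁ - c₂) / 2, by linarith, fun L L' a b hb h => by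
    nlinarith [mul_nonneg (sub_nonneg.2 hc.le) hb]⟩

theorem exists_lyapunov_weights_of_multiplier_bound {α μ₀ μ₁ c d : ℝ} (hα : 0 < α)
    (hμ₀ : 0 < μ₀) (hμ₁ : 0 < μ₁) (hd : 0 ≤ d) (hαbig : α > 4 * (c + d) / (μ₁ * μ₀)) :
    ∃ σ₀ > (0 : ℝ), ∃ σ₁ > (0 : ℝ), ∀ L L' P s t : ℝ, 0 ≤ t → L' + μ₁ / 2 * s ≤ L + P / α →
      μ₀ * P ≤ 2 * (c * s + d * t) → σ₁ * s ≤ (L + σ₀ / 2 * t) - (L' + σ₀ / 2 * s) := by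
  set κ := 2 / (α * μ₀) with hκ
  have hsmall : κ * (c + d) < μ₁ / 2 := by
    rw [gt_iff_lt, div_lt_iff₀ (by positivity)] at hαbig
    rw [hκ, div_mul_eq_mul_div, div_lt_iff₀ (by positivity)]
    nlinarith
  obtain ⟨σ₀, hσ₀, σ₁, hσ₁, hσ⟩ := exists_pos_lyapunov_weights
    (c₁ := μ₁ / 2 - κ * c) (c₂ := κ * d) (by positivity) (by linarith)
  refine ⟨σ₀, hσ₀, σ₁, hσ₁, fun L L' P s t ht hstep hP => hσ L L' s t ht ?_⟩
  have hPα : P / α ≤ κ * (c * s + d * t) :=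
    calc P / α = μ₀ * P / (α * μ₀) := by field_simp
      _ ≤ 2 * (c * s + d * t) / (α * μ₀) := by gcongr
      _ = κ * (c * s + d * t) := by ring
  linarith

theorem badmm_lemma_III_1_general
{n₁ n₂ m : ℕ}
    (A : EuclideanSpace ℝ (Fin n₁) →L[ℝ] EuclideanSpace ℝ (Fin m))
    (B : EuclideanSpace ℝ (Fin n₂) →L[ℝ] EuclideanSpace ℝ (Fin m))
    (f : EuclideanSpace ℝ (Fin n₁) → ℝ) (g : EuclideanSpace ℝ (Fin n₂) → ℝ)
    (f' : EuclideanSpace ℝ (Fin n₁) → EuclideanSpace ℝ (Fin n₁))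
    (hfgrad : ∀ u, HasGradientAt f (f' u) u)
    (ℓf : ℝ) (hf' : ∀ u v, ‖f' u - f' v‖ ≤ ℓf * ‖u - v‖)
    (φ : EuclideanSpace ℝ (Fin n₁) → ℝ)
    (φ' : EuclideanSpace ℝ (Fin n₁) → EuclideanSpace ℝ (Fin n₁))
    (hφconv : ConvexOn ℝ Set.univ φ) (hφdiff : ∀ u, HasGradientAt φ (φ' u) u)
    (ℓφ : ℝ) (hφ' : ∀ u v, ‖φ' u - φ' v‖ ≤ ℓφ * ‖u - v‖)
    (ψ : EuclideanSpace ℝ (Fin n₂) → ℝ)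
    (ψ' : EuclideanSpace ℝ (Fin n₂) → EuclideanSpace ℝ (Fin n₂))
    (hψconv : ConvexOn ℝ Set.univ ψ) (hψdiff : ∀ u, HasGradientAt ψ (ψ' u) u)
    (α μ₀ : ℝ) (hα : 0 < α) (hμ₀ : 0 < μ₀)
    (hA : ∀ q : EuclideanSpace ℝ (Fin m),
      μ₀ * ‖q‖ ^ 2 ≤ ‖ContinuousLinearMap.adjoint A q‖ ^ 2)
    (μ₁ : ℝ) (hμ₁ : 0 < μ₁)
    (hsc : (∀ (y : EuclideanSpace ℝ (Fin n₂)) (p : EuclideanSpace ℝ (Fin m)),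
          ConvexOn ℝ Set.univ (fun x => augL A B f g α x y p - μ₁ / 2 * ‖x‖ ^ 2)) ∨
        ConvexOn ℝ Set.univ (fun x => φ x - μ₁ / 2 * ‖x‖ ^ 2))
    (hαbig : α > 4 * ((ℓf + ℓφ) ^ 2 + ℓφ ^ 2) / (μ₁ * μ₀))
    (x : ℕ → EuclideanSpace ℝ (Fin n₁)) (y : ℕ → EuclideanSpace ℝ (Fin n₂))
    (p : ℕ → EuclideanSpace ℝ (Fin m))
    (hy : ∀ k, ∀ y' : EuclideanSpace ℝ (Fin n₂),
      augL A B f g α (x k) (y (k + 1)) (p k) + bregman ψ ψ' (y (k + 1)) (y k) ≤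
        augL A B f g α (x k) y' (p k) + bregman ψ ψ' y' (y k))
    (hx : ∀ k, ∀ x' : EuclideanSpace ℝ (Fin n₁),
      augL A B f g α (x (k + 1)) (y (k + 1)) (p k) + bregman φ φ' (x (k + 1)) (x k) ≤
        augL A B f g α x' (y (k + 1)) (p k) + bregman φ φ' x' (x k))
    (hp : ∀ k, p (k + 1) = p k + α • (A (x (k + 1)) - B (y (k + 1)))) :
    ∃ σ₀ > (0 : ℝ), ∃ σ₁ > (0 : ℝ), ∀ k : ℕ, 1 ≤ k →
      σ₁ * ‖x (k + 1) - x k‖ ^ 2 ≤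
        (augL A B f g α (x k) (y k) (p k) + σ₀ / 2 * ‖x k - x (k - 1)‖ ^ 2)
          - (augL A B f g α (x (k + 1)) (y (k + 1)) (p (k + 1))
              + σ₀ / 2 * ‖x (k + 1) - x k‖ ^ 2) := by
  have hdual : ∀ k, (A†) (p (k + 1)) = -f' (x (k + 1)) - (φ' (x (k + 1)) - φ' (x k)) :=
    fun k => adjoint_eq_of_isBregmanProx (hx k) (hp k) (hfgrad _) (hφdiff _)
  have hsc' : ∀ k, StrongConvexOn univ μ₁ (fun x' => augL A B f g α x' (y (k + 1)) (p k)) ∨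
      StrongConvexOn univ μ₁ φ := fun k =>
    hsc.imp (fun h => strongConvexOn_iff_convex.2 (h _ _)) strongConvexOn_iff_convex.2
  obtain ⟨σ₀, hσ₀, σ₁, hσ₁, hσ⟩ :=
    exists_lyapunov_weights_of_multiplier_bound hα hμ₀ hμ₁ (sq_nonneg ℓφ) hαbig
  refine ⟨σ₀, hσ₀, σ₁, hσ₁, fun k hk => ?_⟩
  obtain ⟨j, rfl⟩ := Nat.exists_eq_add_of_le' hk
  rw [Nat.add_sub_cancel]
  exact hσ _ _ _ _ _ (sq_nonneg _)
    (augL_add_sq_le_of_badmm_step (hy _) (hx _) (hp _) hψconv (hψdiff _) (hfgrad _) hφconv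
      (hφdiff _) (hφdiff _).differentiableAt (hsc' _))
    (sq_norm_sub_le_of_adjoint_eq hA hf' hφ' (hdual j) (hdual (j + 1)))

theorem badmm_lemma_III_1
{n₁ n₂ m : ℕ} (hn₁ : 0 < n₁) (hn₂ : 0 < n₂) (hm : 0 < m)
    (A : EuclideanSpace ℝ (Fin n₁) →L[ℝ] EuclideanSpace ℝ (Fin m))
    (B : EuclideanSpace ℝ (Fin n₂) →L[ℝ] EuclideanSpace ℝ (Fin m))
    (f : EuclideanSpace ℝ (Fin n₁) → ℝ) (g : EuclideanSpace ℝ (Fin n₂) → ℝ)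
    (f' : EuclideanSpace ℝ (Fin n₁) → EuclideanSpace ℝ (Fin n₁))
    (hfC1 : ContDiff ℝ 1 f) (hfgrad : ∀ u, HasGradientAt f (f' u) u)
    (ℓf : ℝ) (hℓf : 0 ≤ ℓf) (hf' : ∀ u v, ‖f' u - f' v‖ ≤ ℓf * ‖u - v‖)
    (hg : LowerSemicontinuous g)
    (φ : EuclideanSpace ℝ (Fin n₁) → ℝ)
    (φ' : EuclideanSpace ℝ (Fin n₁) → EuclideanSpace ℝ (Fin n₁))
    (hφconv : ConvexOn ℝ Set.univ φ) (hφdiff : ∀ u, HasGradientAt φ (φ' u) u)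
    (ℓφ : ℝ) (hℓφ : 0 ≤ ℓφ) (hφ' : ∀ u v, ‖φ' u - φ' v‖ ≤ ℓφ * ‖u - v‖)
    (ψ : EuclideanSpace ℝ (Fin n₂) → ℝ)
    (ψ' : EuclideanSpace ℝ (Fin n₂) → EuclideanSpace ℝ (Fin n₂))
    (hψconv : ConvexOn ℝ Set.univ ψ) (hψdiff : ∀ u, HasGradientAt ψ (ψ' u) u)
    (ℓψ : ℝ) (hℓψ : 0 ≤ ℓψ) (hψ' : ∀ u v, ‖ψ' u - ψ' v‖ ≤ ℓψ * ‖u - v‖)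
    (α μ₀ : ℝ) (hα : 0 < α) (hμ₀ : 0 < μ₀)
    (hA : ∀ q : EuclideanSpace ℝ (Fin m),
      μ₀ * ‖q‖ ^ 2 ≤ ‖ContinuousLinearMap.adjoint A q‖ ^ 2)
    (μ₁ : ℝ) (hμ₁ : 0 < μ₁)
    (hsc : (∀ (y : EuclideanSpace ℝ (Fin n₂)) (p : EuclideanSpace ℝ (Fin m)),
          ConvexOn ℝ Set.univ (fun x => augL A B f g α x y p - μ₁ / 2 * ‖x‖ ^ 2)) ∨
        ConvexOn ℝ Set.univ (fun x => φ x - μ₁ / 2 * ‖x‖ ^ 2))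
    (hαbig : α > 4 * ((ℓf + ℓφ) ^ 2 + ℓφ ^ 2) / (μ₁ * μ₀))
    (x : ℕ → EuclideanSpace ℝ (Fin n₁)) (y : ℕ → EuclideanSpace ℝ (Fin n₂))
    (p : ℕ → EuclideanSpace ℝ (Fin m))
    (hy : ∀ k, ∀ y' : EuclideanSpace ℝ (Fin n₂),
      augL A B f g α (x k) (y (k + 1)) (p k) + bregman ψ ψ' (y (k + 1)) (y k) ≤
        augL A B f g α (x k) y' (p k) + bregman ψ ψ' y' (y k))
    (hx : ∀ k, ∀ x' : EuclideanSpace ℝ (Fin n₁),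
      augL A B f g α (x (k + 1)) (y (k + 1)) (p k) + bregman φ φ' (x (k + 1)) (x k) ≤
        augL A B f g α x' (y (k + 1)) (p k) + bregman φ φ' x' (x k))
    (hp : ∀ k, p (k + 1) = p k + α • (A (x (k + 1)) - B (y (k + 1)))) :
    ∃ σ₀ > (0 : ℝ), ∃ σ₁ > (0 : ℝ), ∀ k : ℕ, 1 ≤ k →
      σ₁ * ‖x (k + 1) - x k‖ ^ 2 ≤
        (augL A B f g α (x k) (y k) (p k) + σ₀ / 2 * ‖x k - x (k - 1)‖ ^ 2)
          - (augL A B f g α (x (k + 1)) (y (k + 1)) (p (k + 1))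
              + σ₀ / 2 * ‖x (k + 1) - x k‖ ^ 2) :=
  badmm_lemma_III_1_general A B f g f' hfgrad ℓf hf' φ φ' hφconv hφdiff ℓφ hφ' ψ ψ' hψconv hψdiff α
    μ₀ hα hμ₀ hA μ₁ hμ₁ hsc hαbig x y p hy hx hp
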